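/- arXiv:1509.06424 — 2 statements merged into one kernel-verified Lean document; each statement's English description precedes it below -/
import Mathlib

section
/- Let Y be a simplicial set and δ_0, …, δ_n pairwise commuting simplicial automorphisms of Y. For a q-simplex w of Δ[n] let m_k(w) be the number of p with w(p) = k, and define α_q : Y_q × Δ[n]_q → Y_q × Δ[n]_q by α_q(y, w) = ((δ_0^{1−m_0(w)} ∘ ⋯ ∘ δ_n^{1−m_n(w)})(y), w). Then for all q and all 0 ≤ i ≤ q, s_i^δ(α_q(y, w)) = α_{q+1}(s_i y, s_i w), and each α_q is a bijection. Consequently α is an isomorphism of simplicial sets from the Cartesian product Y × Δ[n] to the δ-twisted Cartesian product Y ×_δ Δ[n], commuting with the projections to Δ[n]. -/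
open CategoryTheory Simplicial

universe u

namespace TwistedDelta

/-- The `q`-simplices of the standard simplicial `n`-simplex `Δ[n]`:
monotone maps `{0,…,q} → {0,…,n}`. -/
def DeltaSimp (n q : ℕ) : Type :=
  { w : Fin (q + 1) → Fin (n + 1) // Monotone w }

/-- The face `d_i` of `Δ[n]`, precomposing with the `i`-th coface (skipping `i`). -/
def DeltaSimp.face {n q : ℕ} (i : Fin (q + 2)) (w : DeltaSimp n (q + 1)) : DeltaSimp n q :=
  ⟨w.1 ∘ i.succAbove, w.2.comp (Fin.strictMono_succAbove i).monotone⟩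

/-- The degeneracy `s_i` of `Δ[n]`, precomposing with the `i`-th codegeneracy (repeating `i`). -/
def DeltaSimp.degen {n q : ℕ} (i : Fin (q + 1)) (w : DeltaSimp n q) : DeltaSimp n (q + 1) :=
  ⟨w.1 ∘ i.predAbove, w.2.comp (Fin.predAbove_right_monotone i)⟩

/-- `m_k(w)`: the number of `p` with `w(p) = k`. -/
def mult {n q : ℕ} (k : Fin (n + 1)) (w : DeltaSimp n q) : ℕ :=
  (Finset.univ.filter fun p => w.1 p = k).card

/-- The untwisting automorphism `δ_0^{1−m_0(w)} ∘ δ_1^{1−m_1(w)} ∘ ⋯ ∘ δ_n^{1−m_n(w)}`. -/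
def untwist {n : ℕ} (Y : SSet.{u}) (δ : Fin (n + 1) → Aut Y) {q : ℕ} (w : DeltaSimp n q) :
    Aut Y :=
  (List.ofFn fun k => (δ k) ^ ((1 : ℤ) - mult k w)).prod

/-- The map `α_q : Y_q × Δ[n]_q → Y_q × Δ[n]_q`,
`α_q(y, w) = ((δ_0^{1−m_0(w)} ∘ ⋯ ∘ δ_n^{1−m_n(w)})(y), w)`. -/
def alphaMap {n : ℕ} (Y : SSet.{u}) (δ : Fin (n + 1) → Aut Y) (q : ℕ) :
    Y _⦋q⦌ × DeltaSimp n q → Y _⦋q⦌ × DeltaSimp n q :=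
  fun p => ((untwist Y δ p.2).hom.app (Opposite.op (SimplexCategory.mk q)) p.1, p.2)

/-- The twisted face `d_i^δ(y, w) = (δ_{w(i)}(d_i y), d_i w)` on `Y_q × Δ[n]_q`. -/
def twistedFace {n : ℕ} (Y : SSet.{u}) (δ : Fin (n + 1) → Aut Y) {q : ℕ}
    (i : Fin (q + 2)) :
    Y _⦋q + 1⦌ × DeltaSimp n (q + 1) → Y _⦋q⦌ × DeltaSimp n q :=
  fun p => ((δ (p.2.1 i)).hom.app (Opposite.op (SimplexCategory.mk q)) (Y.δ i p.1),
    p.2.face i)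

/-- The twisted degeneracy `s_i^δ(y, w) = (δ_{w(i)}⁻¹(s_i y), s_i w)` on `Y_q × Δ[n]_q`. -/
def twistedDegeneracy {n : ℕ} (Y : SSet.{u}) (δ : Fin (n + 1) → Aut Y) {q : ℕ}
    (i : Fin (q + 1)) :
    Y _⦋q⦌ × DeltaSimp n q → Y _⦋q + 1⦌ × DeltaSimp n (q + 1) :=
  fun p => ((δ (p.2.1 i)).inv.app (Opposite.op (SimplexCategory.mk (q + 1))) (Y.σ i p.1),
    p.2.degen i)

end TwistedDelta

/-!
Automorphisms of `Y` act on every `Y_q` compatibly with faces and degeneracies, and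
`α_q(y, w) = u(w) • y` with `u(w) = ∏ₖ δ_k^{1 - m_k(w)}`. The degeneracy `s_i` raises the
multiplicity of `w(i)` by one and the face `d_i` lowers it by one, leaving all other
multiplicities alone; as the `δ_k` commute, `u(s_i w) = u(w) δ_{w(i)}⁻¹` and
`u(d_i w) = u(w) δ_{w(i)}`, and `δ_{w(i)}` commutes with `u(w)`, which is exactly the twist in
`s_i^δ` and `d_i^δ`. Each `α_q` is bijective because each `u(w)` is invertible.
-/

open Function

theorem List.prod_ofFn_eq_noncommProd {M : Type*} [Monoid M] {m : ℕ} (f : Fin m → M)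
    (comm : ((Finset.univ : Finset (Fin m)) : Set (Fin m)).Pairwise (Commute on f)) :
    (List.ofFn f).prod = Finset.univ.noncommProd f comm := by
  simp only [Finset.noncommProd, Fin.univ_val_map, Multiset.noncommProd_coe]

theorem List.prod_ofFn_zpow_add_single {G : Type*} [Group G] {m : ℕ} (g : Fin m → G)
    (hg : ∀ k l, Commute (g k) (g l)) (e : Fin m → ℤ) (j : Fin m) (z : ℤ) :
    (List.ofFn fun k => g k ^ (e + Pi.single j z : Fin m → ℤ) k).prod =
      (List.ofFn fun k => g k ^ e k).prod * g j ^ z := by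
  have hcomm (e' : Fin m → ℤ) :
      ((Finset.univ : Finset (Fin m)) : Set (Fin m)).Pairwise (Commute on fun k => g k ^ e' k) :=
    fun k _ l _ _ => (hg k l).zpow_zpow _ _
  rw [prod_ofFn_eq_noncommProd _ (hcomm _), prod_ofFn_eq_noncommProd _ (hcomm e),
    ← Finset.noncommProd_erase_mul _ (Finset.mem_univ j),
    ← Finset.noncommProd_erase_mul _ (Finset.mem_univ j),
    Pi.add_apply, Pi.single_eq_same, zpow_add, ← mul_assoc]
  congr 2
  apply Finset.noncommProd_congr rfl
  intro k hk
  rw [Pi.add_apply, Pi.single_eq_of_ne (Finset.ne_of_mem_erase hk), add_zero]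

namespace TwistedDelta

instance (Y : SSet.{u}) (x : SimplexCategoryᵒᵖ) : MulAction (Aut Y) (Y.obj x) where
  smul a y := a.hom.app x y
  one_smul _ := rfl
  mul_smul _ _ _ := rfl

section Action

variable {Y : SSet.{u}} (a : Aut Y) {x : SimplexCategoryᵒᵖ}

theorem smul_map {x' : SimplexCategoryᵒᵖ} (f : x ⟶ x') (y : Y.obj x) :
    a • Y.map f y = Y.map f (a • y) :=
  NatTrans.naturality_apply a.hom f y

theorem smul_σ {q : ℕ} (i : Fin (q + 1)) (y : Y _⦋q⦌) : a • Y.σ i y = Y.σ i (a • y) :=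
  smul_map a _ y

theorem smul_δ {q : ℕ} (i : Fin (q + 2)) (y : Y _⦋q + 1⦌) : a • Y.δ i y = Y.δ i (a • y) :=
  smul_map a _ y

end Action

variable {n : ℕ}

theorem mult_degen {q : ℕ} (k : Fin (n + 1)) (i : Fin (q + 1)) (w : DeltaSimp n q) :
    mult k (w.degen i) = mult k w + if w.1 i = k then 1 else 0 := by
  -- removing position `i` from `s_i w` leaves `w`, since `predAbove i ∘ succAbove i = id`
  simp only [mult, Finset.card_filter]
  rw [Fin.sum_univ_succAbove _ i.castSucc, add_comm]
  simp only [DeltaSimp.degen, Function.comp_apply, Fin.predAbove_castSucc_self,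
    Fin.predAbove_succAbove]

theorem mult_face {q : ℕ} (k : Fin (n + 1)) (i : Fin (q + 2)) (w : DeltaSimp n (q + 1)) :
    mult k w = mult k (w.face i) + if w.1 i = k then 1 else 0 := by
  simp only [mult, Finset.card_filter]
  rw [Fin.sum_univ_succAbove _ i, add_comm]
  rfl

theorem alphaMap_bijective (Y : SSet.{u}) (δ : Fin (n + 1) → Aut Y) (q : ℕ) :
    Bijective (alphaMap Y δ q) :=
  bijective_iff_has_inverse.mpr ⟨fun p => ((untwist Y δ p.2)⁻¹ • p.1, p.2),
    fun p => Prod.ext (inv_smul_smul (untwist Y δ p.2) p.1) rfl,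
    fun p => Prod.ext (smul_inv_smul (untwist Y δ p.2) p.1) rfl⟩

variable (Y : SSet.{u}) {δ : Fin (n + 1) → Aut Y} (hδ : ∀ k l, Commute (δ k) (δ l))
include hδ

theorem untwist_commute {q : ℕ} (w : DeltaSimp n q) (k : Fin (n + 1)) :
    Commute (untwist Y δ w) (δ k) :=
  Commute.list_prod_left _ _ fun _ hx => by
    obtain ⟨l, rfl⟩ := List.mem_ofFn.mp hx
    exact (hδ l k).zpow_left _

theorem untwist_degen {q : ℕ} (i : Fin (q + 1)) (w : DeltaSimp n q) :
    untwist Y δ (w.degen i) = untwist Y δ w * (δ (w.1 i))⁻¹ := by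
  have hexp (k : Fin (n + 1)) : (1 : ℤ) - mult k (w.degen i) =
      ((fun k => 1 - (mult k w : ℤ)) + Pi.single (w.1 i) (-1) : Fin (n + 1) → ℤ) k := by
    rcases eq_or_ne k (w.1 i) with rfl | hk
    · rw [mult_degen, if_pos rfl, Pi.add_apply, Pi.single_eq_same]
      push_cast; ring
    · rw [mult_degen, if_neg hk.symm, Pi.add_apply, Pi.single_eq_of_ne hk]
      simp
  simp only [untwist, hexp, List.prod_ofFn_zpow_add_single δ hδ, zpow_neg_one]

theorem untwist_face {q : ℕ} (i : Fin (q + 2)) (w : DeltaSimp n (q + 1)) :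
    untwist Y δ (w.face i) = untwist Y δ w * δ (w.1 i) := by
  have hexp (k : Fin (n + 1)) : (1 : ℤ) - mult k (w.face i) =
      ((fun k => 1 - (mult k w : ℤ)) + Pi.single (w.1 i) 1 : Fin (n + 1) → ℤ) k := by
    rcases eq_or_ne k (w.1 i) with rfl | hk
    · simp only [Pi.add_apply, Pi.single_eq_same, mult_face _ i w, if_pos]
      push_cast; ring
    · simp only [Pi.add_apply, Pi.single_eq_of_ne hk, mult_face _ i w, if_neg hk.symm]
      simp
  simp only [untwist, hexp, List.prod_ofFn_zpow_add_single δ hδ, zpow_one]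

theorem twistedDegeneracy_alphaMap {q : ℕ} (i : Fin (q + 1)) (y : Y _⦋q⦌) (w : DeltaSimp n q) :
    twistedDegeneracy Y δ i (alphaMap Y δ q (y, w)) =
      alphaMap Y δ (q + 1) (Y.σ i y, w.degen i) := by
  refine Prod.ext ?_ rfl
  change (δ (w.1 i))⁻¹ • Y.σ i (untwist Y δ w • y) = untwist Y δ (w.degen i) • Y.σ i y
  rw [← smul_σ, smul_smul, untwist_degen Y hδ, (untwist_commute Y hδ w _).inv_right.eq]

theorem twistedFace_alphaMap {q : ℕ} (i : Fin (q + 2)) (y : Y _⦋q + 1⦌)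
    (w : DeltaSimp n (q + 1)) :
    twistedFace Y δ i (alphaMap Y δ (q + 1) (y, w)) = alphaMap Y δ q (Y.δ i y, w.face i) := by
  refine Prod.ext ?_ rfl
  change δ (w.1 i) • Y.δ i (untwist Y δ w • y) = untwist Y δ (w.face i) • Y.δ i y
  rw [← smul_δ, smul_smul, untwist_face Y hδ, (untwist_commute Y hδ w _).eq]

end TwistedDelta

/-- for pairwise commuting simplicial automorphisms `δ_0, …, δ_n` of a
simplicial set `Y`, the map `α` intertwines the untwisted degeneracies with the twisted ones,
`s_i^δ(α_q(y, w)) = α_{q+1}(s_i y, s_i w)`, each `α_q` is a bijection, and (together with the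
corresponding statement for faces) `α` is an isomorphism of simplicial sets from `Y × Δ[n]`
to the `δ`-twisted Cartesian product `Y ×_δ Δ[n]` commuting with the projections to `Δ[n]`. -/
theorem TwistedDelta.alpha_iso {n : ℕ} (Y : SSet.{u})
    (δ : Fin (n + 1) → Aut Y)
    (hcomm : ∀ k l : Fin (n + 1), Commute (δ k) (δ l)) :
    -- α intertwines degeneracies
    (∀ (q : ℕ) (i : Fin (q + 1)) (y : Y _⦋q⦌) (w : DeltaSimp n q),
      twistedDegeneracy Y δ i (alphaMap Y δ q (y, w)) =
        alphaMap Y δ (q + 1) (Y.σ i y, w.degen i)) ∧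
    -- α intertwines faces
    (∀ (q : ℕ) (i : Fin (q + 2)) (y : Y _⦋q + 1⦌) (w : DeltaSimp n (q + 1)),
      twistedFace Y δ i (alphaMap Y δ (q + 1) (y, w)) =
        alphaMap Y δ q (Y.δ i y, w.face i)) ∧
    -- each α_q is a bijection
    (∀ q : ℕ, Function.Bijective (alphaMap Y δ q)) ∧
    -- α commutes with the projections to Δ[n]
    (∀ (q : ℕ) (p : Y _⦋q⦌ × DeltaSimp n q), (alphaMap Y δ q p).2 = p.2) :=
  ⟨fun _ => twistedDegeneracy_alphaMap Y hcomm, fun _ => twistedFace_alphaMap Y hcomm,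
    alphaMap_bijective Y δ, fun _ _ => rfl⟩
end

section
/- Let C be a small category, C⁺ = WithInitial(C) with adjoined initial object a, A an abelian group regarded as a discrete simplicial group, and δ an assignment of endomorphisms δ_v of A to the objects of C⁺ satisfying δ_v ∘ δ_w = δ_w ∘ δ_v whenever there is a morphism between v and w, with δ_a an automorphism. Consider the chain complex with C_n = ⊕_{x ∈ N(C⁺)_n, x ≠ aⁿ} A and differential ∂_n(g_x) = Σ_{i=0}^n (−1)^i (δ_{v_i}(g))_{d_i x}, and let Φ(g_x) = (δ_a^{-1}(g))_{a·x}. Then ∂_{n+1} ∘ Φ_n + Φ_{n−1} ∘ ∂_n = id on C_n for all n ≥ 1 and ∂_1 ∘ Φ_0 = id on C_0; consequently the chain complex {C_n, ∂_n} is contractible, i.e. H_n(C_*, ∂_*) = 0 for all n ≥ 0. -/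
/-!
`Φ` is an extra degeneracy for the nerve of `C⁺`: prepending the initial object `a` gives
`d₀(a·x) = x`, `d_{j+1}(a·x) = a·(d_j x)` and `a·aⁿ = aⁿ⁺¹`, so `Φ` respects the zeroed
basepoint copies. In `∂Φ(g_x)` the `i = 0` term is `(δ_a δ_a⁻¹ g)_x = g_x`, and the term
`i = j + 1` is `(-1)^(j+1) (δ_{v_j} δ_a⁻¹ g)_{a·d_j x}`; since `δ_a` commutes with every `δ_v`
(there is always a morphism `a → v`), these cancel the terms of `Φ∂(g_x)`. For `x` a vertex the
only other term lives on the basepoint `a⁰` and vanishes. A contracting homotopy makes every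
cycle a boundary.
-/

open CategoryTheory Simplicial DirectSum

universe u

attribute [local instance] Classical.decEq

namespace ConeCat

variable (C : Type u) [SmallCategory C]

/-- The `n`-simplices of the nerve of `C⁺ = WithInitial C`. -/
abbrev NerveP (n : ℕ) : Type u := ComposableArrows (WithInitial C) n

/-- The face map of the nerve of `C⁺`. -/
def nerveFace {n : ℕ} (i : Fin (n + 2)) (x : NerveP C (n + 1)) : NerveP C n :=
  (nerve (WithInitial C)).δ i x

/-- The totally degenerate `n`-simplex `aⁿ` at the adjoined initial object `a = star`. -/
def basept (n : ℕ) : NerveP C n :=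
  (CategoryTheory.Functor.const (Fin (n + 1))).obj (WithInitial.star)

/-- `a·x`: the `(n+1)`-simplex obtained from `x` by prepending the initial object `a` via
its unique morphism to the first vertex of `x`. -/
def aDot {n : ℕ} (x : NerveP C n) : NerveP C (n + 1) :=
  x.precomp (Limits.IsInitial.to WithInitial.starInitial x.left)

variable (A : Type u) [AddCommGroup A]

/-- `C_n = ⊕_{x ∈ N(C⁺)_n, x ≠ aⁿ} A`. -/
abbrev Cn (n : ℕ) : Type u :=
  ⨁ _ : { x : NerveP C n // x ≠ basept C n }, A

/-- The inclusion of the copy of `A` labelled by `x`; the copy labelled by the basepoint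
simplex `aⁿ` is set to zero. -/
noncomputable def embHom {n : ℕ} (x : NerveP C n) : A →+ Cn C A n :=
  if h : x = basept C n then 0
  else DirectSum.of (fun _ : { x : NerveP C n // x ≠ basept C n } => A) ⟨x, h⟩

/-- The twisted face homomorphism `d_i^δ(g_x) = (δ_{v_i}(g))_{d_i x}` (the group `A` being a
discrete simplicial group, `d_i` acts as the identity on `A`). -/
noncomputable def dFace (δ : WithInitial C → (A →+ A)) (n : ℕ) (i : Fin (n + 2)) :
    Cn C A (n + 1) →+ Cn C A n :=
  DirectSum.toAddMonoid fun x => (embHom C A (nerveFace C i x.1)).comp (δ (x.1.obj i))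

/-- The contracting homotopy `Φ(g_x) = (δ_a⁻¹(g))_{a·x}`. -/
noncomputable def Phi (σa : A ≃+ A) (n : ℕ) : Cn C A n →+ Cn C A (n + 1) :=
  DirectSum.toAddMonoid fun x => (embHom C A (aDot C x.1)).comp σa.symm.toAddMonoidHom

/-- The twisted differential `∂_{n+1} = Σᵢ (−1)^i d_i^δ : C_{n+1} → C_n`. -/
noncomputable def bdry (δ : WithInitial C → (A →+ A)) (n : ℕ) :
    Cn C A (n + 1) →+ Cn C A n :=
  ∑ i : Fin (n + 2), ((-1 : ℤ) ^ (i : ℕ)) • dFace C A δ n i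

end ConeCat

lemma AddEquiv.symm_apply_comm {A : Type*} [AddZeroClass A] (σ : A ≃+ A) {f : A →+ A}
    (h : σ.toAddMonoidHom.comp f = f.comp σ.toAddMonoidHom) (g : A) :
    σ.symm (f g) = f (σ.symm g) :=
  σ.symm_apply_eq.mpr <| by simpa using (DFunLike.congr_fun h (σ.symm g)).symm

lemma AddMonoidHom.mem_range_of_comp_add_comp_eq_id {X Y Z : Type*} [AddCommMonoid X]
    [AddCommMonoid Y] [AddCommMonoid Z] {d : Y →+ X} {h : X →+ Y} {d' : X →+ Z} {h' : Z →+ X}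
    (H : d.comp h + h'.comp d' = AddMonoidHom.id X) {x : X} (hx : d' x = 0) :
    x ∈ Set.range d :=
  ⟨h x, by simpa [hx] using DFunLike.congr_fun H x⟩

lemma CategoryTheory.ComposableArrows.whiskerLeft_congr {D : Type*} [Category D] {m n : ℕ}
    (y : ComposableArrows D n) {F G : Fin (m + 1) ⥤ Fin (n + 1)} (h : ∀ i, F.obj i = G.obj i) :
    y.whiskerLeft F = y.whiskerLeft G := by
  rw [CategoryTheory.Functor.ext h fun _ _ _ => Subsingleton.elim _ _]

namespace ConeCat

section Nerve

variable {C : Type u} [SmallCategory C]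

lemma hom_ext_of_target_eq_star {X Y : WithInitial C} (hY : Y = WithInitial.star) (f g : X ⟶ Y) :
    f = g := by
  subst hY
  cases X
  · exact PEmpty.elim f
  · exact Subsingleton.elim (α := PUnit) f g

lemma hom_ext_of_source_eq_star {X Y : WithInitial C} (hX : X = WithInitial.star) (f g : X ⟶ Y) :
    f = g := by
  subst hX
  exact Subsingleton.elim f g

lemma eq_basept_of_obj_eq_star {n : ℕ} (x : NerveP C n)
    (h : ∀ i, x.obj i = WithInitial.star) : x = basept C n :=
  ComposableArrows.ext h fun _ _ => hom_ext_of_target_eq_star (h _) _ _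

lemma nerveFace_basept {n : ℕ} (i : Fin (n + 2)) :
    nerveFace C i (basept C (n + 1)) = basept C n :=
  eq_basept_of_obj_eq_star _ fun _ => rfl

lemma nerveFace_zero_aDot {n : ℕ} (x : NerveP C n) : nerveFace C 0 (aDot C x) = x := rfl

lemma nerveFace_one_aDot (x : NerveP C 0) : nerveFace C 1 (aDot C x) = basept C 0 :=
  eq_basept_of_obj_eq_star _ fun i => by fin_cases i; rfl

lemma aDot_obj_zero {n : ℕ} (x : NerveP C n) : (aDot C x).obj 0 = WithInitial.star := rfl

lemma aDot_obj_succ {n : ℕ} (x : NerveP C n) (j : Fin (n + 1)) :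
    (aDot C x).obj j.succ = x.obj j := rfl

lemma aDot_basept (n : ℕ) : aDot C (basept C n) = basept C (n + 1) :=
  eq_basept_of_obj_eq_star _ fun i => Fin.cases rfl (fun _ => rfl) i

lemma eq_aDot_δ₀ {n : ℕ} (y : NerveP C (n + 1)) (hy : y.obj 0 = WithInitial.star) :
    y = aDot C y.δ₀ :=
  ComposableArrows.ext_succ hy rfl (hom_ext_of_source_eq_star hy _ _)

lemma δ₀_nerveFace_succ {n : ℕ} (y : NerveP C (n + 2)) (j : Fin (n + 2)) :
    (nerveFace C j.succ y).δ₀ = nerveFace C j y.δ₀ :=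
  y.whiskerLeft_congr
    (F := Fin.succFunctor _ ⋙ (SimplexCategory.toCat.map (SimplexCategory.δ j.succ)).toFunctor)
    (G := (SimplexCategory.toCat.map (SimplexCategory.δ j)).toFunctor ⋙ Fin.succFunctor _)
    fun i => Fin.succ_succAbove_succ j i

lemma nerveFace_succ_aDot {n : ℕ} (x : NerveP C (n + 1)) (j : Fin (n + 2)) :
    nerveFace C j.succ (aDot C x) = aDot C (nerveFace C j x) :=
  (eq_aDot_δ₀ _ rfl).trans (congrArg (aDot C) (δ₀_nerveFace_succ (aDot C x) j))

end Nerve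

section Chains

variable (C : Type u) [SmallCategory C] (A : Type u) [AddCommGroup A]

lemma embHom_basept (n : ℕ) : embHom C A (basept C n) = 0 := dif_pos rfl

lemma embHom_of_ne {n : ℕ} {x : NerveP C n} (hx : x ≠ basept C n) :
    embHom C A x = DirectSum.of (fun _ : { x : NerveP C n // x ≠ basept C n } => A) ⟨x, hx⟩ :=
  dif_neg hx

variable {C A}

lemma Cn.addHom_ext {M : Type*} [AddMonoid M] {n : ℕ} {f g : Cn C A n →+ M}
    (h : ∀ x a, f (embHom C A x a) = g (embHom C A x a)) : f = g :=
  DirectSum.addHom_ext fun ⟨x, hx⟩ a => by simpa only [embHom_of_ne C A hx] using h x a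

variable {δ : WithInitial C → (A →+ A)} {σa : A ≃+ A}

lemma Phi_embHom {n : ℕ} (x : NerveP C n) (g : A) :
    Phi C A σa n (embHom C A x g) = embHom C A (aDot C x) (σa.symm g) := by
  by_cases hx : x = basept C n
  · subst hx
    rw [embHom_basept, aDot_basept, embHom_basept]
    simp
  · rw [embHom_of_ne C A hx]
    exact DirectSum.toAddMonoid_of _ _ _

lemma bdry_embHom {n : ℕ} (y : NerveP C (n + 1)) (g : A) :
    bdry C A δ n (embHom C A y g) =
      ∑ i : Fin (n + 2), ((-1 : ℤ) ^ (i : ℕ)) • embHom C A (nerveFace C i y) (δ (y.obj i) g) := by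
  by_cases hy : y = basept C (n + 1)
  · subst hy
    simp [embHom_basept, nerveFace_basept]
  · rw [embHom_of_ne C A hy, bdry, AddMonoidHom.finsetSum_apply]
    refine Finset.sum_congr rfl fun i _ => ?_
    rw [AddMonoidHom.smul_apply, dFace, DirectSum.toAddMonoid_of]
    rfl

lemma bdry_comp_Phi_zero (hσa : σa.toAddMonoidHom = δ WithInitial.star) :
    (bdry C A δ 0).comp (Phi C A σa 0) = AddMonoidHom.id (Cn C A 0) :=
  Cn.addHom_ext fun x g => by
    simp [Phi_embHom, bdry_embHom, Fin.sum_univ_two, nerveFace_zero_aDot, nerveFace_one_aDot,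
      aDot_obj_zero, ← hσa, embHom_basept]

lemma bdry_comp_Phi_add_Phi_comp_bdry (hσa : σa.toAddMonoidHom = δ WithInitial.star)
    (hstar : ∀ v, (δ WithInitial.star).comp (δ v) = (δ v).comp (δ WithInitial.star)) (n : ℕ) :
    (bdry C A δ (n + 1)).comp (Phi C A σa (n + 1)) + (Phi C A σa n).comp (bdry C A δ n) =
      AddMonoidHom.id (Cn C A (n + 1)) := by
  have hsymm (v : WithInitial C) (g : A) : σa.symm (δ v g) = δ v (σa.symm g) :=
    σa.symm_apply_comm (hσa ▸ hstar v) g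
  refine Cn.addHom_ext fun x g => ?_
  simp only [AddMonoidHom.add_apply, AddMonoidHom.comp_apply, AddMonoidHom.id_apply]
  rw [Phi_embHom, bdry_embHom, bdry_embHom, Fin.sum_univ_succ, map_sum]
  simp only [map_zsmul, Phi_embHom, hsymm, nerveFace_zero_aDot, Fin.val_zero,
    pow_zero, one_smul, Fin.val_succ, nerveFace_succ_aDot, aDot_obj_succ, aDot_obj_zero,
    ← hσa, AddEquiv.coe_toAddMonoidHom, AddEquiv.apply_symm_apply]
  rw [add_assoc, ← Finset.sum_add_distrib, Finset.sum_eq_zero, add_zero]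
  intro j _
  rw [pow_succ, mul_neg_one, neg_smul, neg_add_cancel]

end Chains

end ConeCat

open ConeCat in
/-- let `C⁺ = WithInitial C` be `C` with a freely adjoined initial object `a`,
`A` an abelian group regarded as a discrete simplicial group, and `δ` a twisted structure on
`C⁺` with coefficients in `A` such that `δ_a` is an automorphism (witnessed by `σa`).  Then
`Φ` is a contracting homotopy for the twisted chain complex `{C_n, ∂_n}`:
`∂_{n+1} ∘ Φ_n + Φ_{n−1} ∘ ∂_n = id` for `n ≥ 1` and `∂_1 ∘ Φ_0 = id`; consequently the
chain complex is contractible, i.e. `H_n(C_*, ∂_*) = 0` for all `n ≥ 0`. -/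
theorem ConeCat.chain_complex_contractible (C : Type u) [SmallCategory C]
    (A : Type u) [AddCommGroup A]
    (δ : WithInitial C → (A →+ A))
    (hcomm : ∀ v w : WithInitial C, (Nonempty (v ⟶ w) ∨ Nonempty (w ⟶ v)) →
      (δ v).comp (δ w) = (δ w).comp (δ v))
    (σa : A ≃+ A) (hσa : σa.toAddMonoidHom = δ WithInitial.star) :
    -- `∂_{n+1} ∘ Φ_n + Φ_{n−1} ∘ ∂_n = id` on `C_n` for `n ≥ 1`
    (∀ n : ℕ,
      (bdry C A δ (n + 1)).comp (Phi C A σa (n + 1)) +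
        (Phi C A σa n).comp (bdry C A δ n) = AddMonoidHom.id (Cn C A (n + 1))) ∧
    -- `∂_1 ∘ Φ_0 = id` on `C_0`
    ((bdry C A δ 0).comp (Phi C A σa 0) = AddMonoidHom.id (Cn C A 0)) ∧
    -- `H_0 = 0`: the boundary `∂_1` is surjective
    Function.Surjective (bdry C A δ 0) ∧
    -- `H_{n+1} = 0`: every cycle is a boundary
    (∀ (n : ℕ) (x : Cn C A (n + 1)), bdry C A δ n x = 0 →
      x ∈ Set.range (bdry C A δ (n + 1))) := by
  have hstar (v : WithInitial C) :
      (δ WithInitial.star).comp (δ v) = (δ v).comp (δ WithInitial.star) :=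
    hcomm _ _ (Or.inl ⟨WithInitial.starInitial.to v⟩)
  have homotopy := bdry_comp_Phi_add_Phi_comp_bdry hσa hstar
  have homotopy_zero := bdry_comp_Phi_zero (C := C) hσa
  exact ⟨homotopy, homotopy_zero,
    fun y => ⟨Phi C A σa 0 y, DFunLike.congr_fun homotopy_zero y⟩,
    fun n _ hx => AddMonoidHom.mem_range_of_comp_add_comp_eq_id (homotopy n) hx⟩
end
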